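/- Rescaling runs of a fully parametric one-parameter timed automaton: let A be a timed automaton all of whose guards and invariants are conjunctions of constraints of the form x ⋈ α·c for a fixed constant c ∈ ℕ (the valuated parameter) with α ∈ ℤ, and let t ∈ ℚ, t > 0, be such that t·c ∈ ℕ. If (ℓ₀, μ₀) →^{(d₀,τ₀)} (ℓ₁, μ₁) →^{(d₁,τ₁)} ⋯ →^{(d_{k−1},τ_{k−1})} (ℓ_k, μ_k) is a run of A, then (ℓ₀, t·μ₀) →^{(t·d₀,τ₀)} (ℓ₁, t·μ₁) →^{(t·d₁,τ₁)} ⋯ (ℓ_k, t·μ_k) is a run of the automaton A' obtained from A by replacing the constant c by t·c everywhere. -/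

import Mathlib

open Classical in
/-- Reset of a clock valuation. -/
noncomputable def reset {X : Type*} (μ : X → NNReal) (R : Set X) : X → NNReal :=
  fun x => if x ∈ R then 0 else μ x

/-- Comparison operators `⋈ ∈ {<, ≤, =, ≥, >}`. -/
inductive Cmp | lt | le | eq | ge | gt

/-- Interpretation of a comparison operator over the reals. -/
def Cmp.eval : Cmp → ℝ → ℝ → Prop
  | .lt, a, b => a < b
  | .le, a, b => a ≤ b
  | .eq, a, b => a = b
  | .ge, a, b => a ≥ b
  | .gt, a, b => a > b

/-- A fully parametric atomic constraint `x ⋈ α·c`, where the constant `c`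
(the valuated parameter) is supplied at satisfaction time. -/
structure Atom (X : Type*) where
  clock : X
  cmp : Cmp
  coef : ℤ

/-- Satisfaction of `x ⋈ α·k` by a clock valuation `μ`, for constant `k`. -/
def Atom.sat {X : Type*} (a : Atom X) (k : ℝ) (μ : X → NNReal) : Prop :=
  a.cmp.eval (μ a.clock) ((a.coef : ℝ) * k)

/-- A fully parametric timed automaton with a single parameter: the constraint
constant is left abstract and supplied at semantics time. -/
structure FPTA (L X Act : Type*) where
  init : L
  inv : L → List (Atom X)
  edges : Set (L × List (Atom X) × Act × Set X × L)

/-- Edges: source, guard, action, reset set, target. -/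
abbrev Edge (L X Act : Type*) := L × List (Atom X) × Act × Set X × L

/-- Combined delay-then-discrete step `(ℓ, μ) →^{(d, τ)} (ℓ', μ')` of the
automaton with constraint constant `k`. -/
def Step {L X Act : Type*} (A : FPTA L X Act) (k : ℝ) (ℓ : L) (μ : X → NNReal)
    (d : NNReal) (τ : Edge L X Act) (ℓ' : L) (μ' : X → NNReal) : Prop :=
  τ ∈ A.edges ∧ τ.1 = ℓ ∧ τ.2.2.2.2 = ℓ' ∧
  (∀ d' : NNReal, d' ≤ d → ∀ a ∈ A.inv ℓ, a.sat k (fun x => μ x + d')) ∧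
  (∀ a ∈ τ.2.1, a.sat k (fun x => μ x + d)) ∧
  μ' = reset (fun x => μ x + d) τ.2.2.2.1 ∧
  (∀ a ∈ A.inv ℓ', a.sat k μ')

/-- A run of the automaton with constant `k`: it starts in the initial location
with all clocks at `0`, and each consecutive pair is related by a combined step. -/
def IsRun {L X Act : Type*} (A : FPTA L X Act) (k : ℝ) {m : ℕ}
    (ℓs : Fin (m + 1) → L) (μs : Fin (m + 1) → X → NNReal)
    (ds : Fin m → NNReal) (τs : Fin m → Edge L X Act) : Prop :=
  ℓs 0 = A.init ∧ μs 0 = (fun _ => 0) ∧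
  ∀ i : Fin m,
    Step A k (ℓs i.castSucc) (μs i.castSucc) (ds i) (τs i) (ℓs i.succ) (μs i.succ)

theorem Cmp.eval_mul_left_iff (cmp : Cmp) {r : ℝ} (hr : 0 < r) (a b : ℝ) :
    cmp.eval (r * a) (r * b) ↔ cmp.eval a b := by
  cases cmp <;> simp only [Cmp.eval, ge_iff_le, gt_iff_lt, mul_lt_mul_iff_right₀ hr,
    mul_le_mul_iff_right₀ hr, mul_right_inj' hr.ne']

theorem Atom.sat_mul_iff {X : Type*} (a : Atom X) {T : NNReal} (hT : 0 < T) (k : ℝ)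
    (μ : X → NNReal) : a.sat (T * k) (fun x => T * μ x) ↔ a.sat k μ := by
  have hscaled : (a.coef : ℝ) * (T * k) = T * (a.coef * k) := by ring
  rw [Atom.sat, Atom.sat, hscaled, NNReal.coe_mul, a.cmp.eval_mul_left_iff (by exact_mod_cast hT)]

theorem reset_mul {X : Type*} (T : NNReal) (μ : X → NNReal) (R : Set X) :
    reset (fun x => T * μ x) R = fun x => T * reset μ R x := by
  funext x
  by_cases hx : x ∈ R <;> simp [reset, hx]

section Rescale

variable {L X Act : Type*} {A : FPTA L X Act} {k : ℝ} {T : NNReal}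

theorem Step.mul {ℓ ℓ' : L} {μ μ' : X → NNReal} {d : NNReal} {τ : Edge L X Act}
    (h : Step A k ℓ μ d τ ℓ' μ') (hT : 0 < T) :
    Step A (T * k) ℓ (fun x => T * μ x) (T * d) τ ℓ' (fun x => T * μ' x) := by
  obtain ⟨hedge, hsrc, htgt, hinv, hguard, hreset, hinv'⟩ := h
  have hdelay : ∀ e : NNReal, (fun x => T * μ x + T * e) = fun x => T * (μ x + e) := by
    intro e; funext x; rw [mul_add]
  refine ⟨hedge, hsrc, htgt, ?_, ?_, ?_, ?_⟩
  · intro d' hd' a ha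
    -- the rescaled delay `d'` is the rescaling of the original delay `d' / T`
    have hd'_eq : d' = T * (d' / T) := (mul_div_cancel₀ d' hT.ne').symm
    rw [hd'_eq, hdelay, a.sat_mul_iff hT]
    refine hinv _ ?_ a ha
    rwa [div_le_iff₀ hT, mul_comm]
  · intro a ha
    rw [hdelay, a.sat_mul_iff hT]
    exact hguard a ha
  · rw [hdelay, reset_mul, hreset]
  · intro a ha
    exact (a.sat_mul_iff hT k μ').2 (hinv' a ha)

theorem IsRun.mul {m : ℕ} {ℓs : Fin (m + 1) → L} {μs : Fin (m + 1) → X → NNReal}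
    {ds : Fin m → NNReal} {τs : Fin m → Edge L X Act}
    (h : IsRun A k ℓs μs ds τs) (hT : 0 < T) :
    IsRun A (T * k) ℓs (fun i x => T * μs i x) (fun i => T * ds i) τs := by
  obtain ⟨hinit, hzero, hsteps⟩ := h
  refine ⟨hinit, ?_, fun i => (hsteps i).mul hT⟩
  funext x
  simp [hzero]

end Rescale

/-- Rescaling runs of a fully parametric one-parameter timed automaton: replacing
the constant `c` by `t·c = c'` and multiplying all clock values and delays by the
positive rational `t` transforms a run of `A` into a run of the rescaled automaton,
along the same locations and edges. -/
theorem rescale_run {L X Act : Type*} (A : FPTA L X Act) (c : ℕ) (t : ℚ)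
    (ht : 0 < t) (c' : ℕ) (hc' : (c' : ℚ) = t * (c : ℚ)) {m : ℕ}
    (ℓs : Fin (m + 1) → L) (μs : Fin (m + 1) → X → NNReal)
    (ds : Fin m → NNReal) (τs : Fin m → Edge L X Act)
    (h : IsRun A (c : ℝ) ℓs μs ds τs) :
    IsRun A (c' : ℝ) ℓs (fun i x => ((t : ℝ).toNNReal) * μs i x)
      (fun i => ((t : ℝ).toNNReal) * ds i) τs := by
  have htR : (0 : ℝ) < t := by exact_mod_cast ht
  have hc'R : (c' : ℝ) = ((t : ℝ).toNNReal : ℝ) * c := by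
    rw [Real.coe_toNNReal _ htR.le]
    exact_mod_cast hc'
  rw [hc'R]
  exact h.mul (Real.toNNReal_pos.2 htR)
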